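/- Let $n \ge 2$ and $F(t) = \sum_{m=1}^{2^{n-1}} n^m (\log n)\, \chi_{(\frac{1}{n^m},\frac{1}{n^{m-1}}]}(t)$, a step function on $(0,1)$. Then $\|F\|_{1,\infty} = \sup_{t \in (0,1)} t F^*(t) \le n \log n$. -/

import Mathlib

open MeasureTheory Set

/-- The distribution function of `f` viewed as a function on `(0,1)`. -/
noncomputable def distrib (f : ℝ → ℝ) (s : ℝ) : ENNReal :=
  volume {x ∈ Set.Ioo (0 : ℝ) 1 | s < |f x|}

/-- The decreasing rearrangement `f*` of a function on `(0,1)`. -/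
noncomputable def rearr (f : ℝ → ℝ) (t : ℝ) : ℝ :=
  sInf {s : ℝ | 0 < s ∧ distrib f s ≤ ENNReal.ofReal t}

/-- The weak-`L¹` quasi-norm `‖f‖_{1,∞} = sup_{t ∈ (0,1)} t f*(t)`. -/
noncomputable def wnorm (f : ℝ → ℝ) : ENNReal :=
  ⨆ t ∈ Set.Ioo (0 : ℝ) 1, ENNReal.ofReal (t * rearr f t)

/-!
On the piece `(b⁻ᵐ, b¹⁻ᵐ]` the step function takes the value `bᵐ c`, so for `x > b⁻ʲ` it is at most
`b^min(j, M) c`. Given `t ∈ (0,1)`, choose `p` with `b⁻⁽ᵖ⁺¹⁾ < t ≤ b⁻ᵖ`; then the level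
`s = b^min(p+1, M) c` is exceeded only on `(0, b⁻⁽ᵖ⁺¹⁾]`, so `f*(t) ≤ s` and `t f*(t) ≤ b⁻ᵖ bᵖ⁺¹ c = b c`.
-/

open Function

lemma distrib_le_of_abs_le {f : ℝ → ℝ} {a s : ℝ}
    (h : ∀ x, a < x → |f x| ≤ s) : distrib f s ≤ ENNReal.ofReal a := by
  have hsub : {x ∈ Ioo (0 : ℝ) 1 | s < |f x|} ⊆ Ioc 0 a := fun x ⟨hx, hfx⟩ =>
    ⟨hx.1, not_lt.1 fun hax => (h x hax).not_gt hfx⟩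
  calc distrib f s ≤ volume (Ioc 0 a) := measure_mono hsub
    _ = ENNReal.ofReal a := by rw [Real.volume_Ioc, sub_zero]

lemma rearr_le {f : ℝ → ℝ} {s t : ℝ} (hs : 0 < s) (h : distrib f s ≤ ENNReal.ofReal t) :
    rearr f t ≤ s :=
  csInf_le ⟨0, fun _ hy => hy.1.le⟩ ⟨hs, h⟩

lemma wnorm_le {f : ℝ → ℝ} {C : ℝ}
    (h : ∀ t ∈ Ioo (0 : ℝ) 1, ∃ s, 0 < s ∧ distrib f s ≤ ENNReal.ofReal t ∧ t * s ≤ C) :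
    wnorm f ≤ ENNReal.ofReal C := by
  refine iSup₂_le fun t ht => ENNReal.ofReal_le_ofReal ?_
  obtain ⟨s, hs, hdist, hts⟩ := h t ht
  exact (mul_le_mul_of_nonneg_left (rearr_le hs hdist) ht.1.le).trans hts

lemma Finset.sum_indicator_le_of_pairwiseDisjoint {ι α : Type*} {s : Finset ι} {S : ι → Set α}
    {g : ι → α → ℝ} (hS : (s : Set ι).PairwiseDisjoint S) {c : ℝ} (hc : 0 ≤ c) {x : α}
    (h : ∀ i ∈ s, x ∈ S i → g i x ≤ c) : ∑ i ∈ s, (S i).indicator (g i) x ≤ c := by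
  by_cases hx : ∃ i ∈ s, x ∈ S i
  · obtain ⟨i, hi, hxi⟩ := hx
    rw [Finset.sum_eq_single_of_mem i hi fun j hj hji =>
      indicator_of_notMem (fun hxj => (hS hj hi hji).ne_of_mem hxj hxi rfl) _,
      indicator_of_mem hxi]
    exact h i hi hxi
  · push Not at hx
    rw [Finset.sum_eq_zero fun i hi => indicator_of_notMem (hx i hi) _]
    exact hc

noncomputable def geomStep (b c : ℝ) (M : ℕ) (x : ℝ) : ℝ :=
  ∑ m ∈ Finset.Icc 1 M, (Ioc (1 / b ^ m) (1 / b ^ (m - 1))).indicator (fun _ => b ^ m * c) x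

variable {b c : ℝ} {M : ℕ}

lemma pairwise_disjoint_Ioc_one_div_pow (hb : 1 ≤ b) :
    Pairwise (Disjoint on fun m : ℕ => Ioc (1 / b ^ m) (1 / b ^ (m - 1))) :=
  (one_div_pow_anti hb).pairwise_disjoint_on_Ioc_pred

lemma geomStep_nonneg (hb : 0 ≤ b) (hc : 0 ≤ c) (x : ℝ) : 0 ≤ geomStep b c M x :=
  Finset.sum_nonneg fun _ _ => indicator_nonneg (fun _ _ => by positivity) _

lemma geomStep_le (hb : 1 ≤ b) (hc : 0 ≤ c) {j : ℕ} {x : ℝ} (hx : 1 / b ^ j < x) :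
    geomStep b c M x ≤ b ^ min j M * c := by
  refine Finset.sum_indicator_le_of_pairwiseDisjoint
    ((pairwise_disjoint_Ioc_one_div_pow hb).set_pairwise _) (by positivity) fun m hm hxm => ?_
  rw [Finset.mem_Icc] at hm
  have hmj : m - 1 < j := by
    by_contra! hjm
    exact (hx.trans_le hxm.2).not_ge (one_div_pow_anti hb hjm)
  gcongr
  omega

theorem wnorm_geomStep_le (hb : 1 < b) (hc : 0 < c) :
    wnorm (geomStep b c M) ≤ ENNReal.ofReal (b * c) := by
  refine wnorm_le fun t ⟨ht0, ht1⟩ => ?_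
  obtain ⟨p, hpt, htp⟩ := exists_nat_pow_near (one_le_one_div ht0 ht1.le) hb
  refine ⟨b ^ min (p + 1) M * c, by positivity, ?_, ?_⟩
  · have hbp : 1 / b ^ (p + 1) < t := (one_div_lt (by positivity) ht0).2 htp
    refine (distrib_le_of_abs_le fun x hx => ?_).trans (ENNReal.ofReal_le_ofReal hbp.le)
    rw [abs_of_nonneg (geomStep_nonneg (by positivity) hc.le x)]
    exact geomStep_le hb.le hc.le hx
  · have htb : t ≤ 1 / b ^ p := (le_one_div ht0 (by positivity)).2 hpt
    calc t * (b ^ min (p + 1) M * c) ≤ 1 / b ^ p * (b ^ (p + 1) * c) := by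
          gcongr
          · exact hb.le
          · exact min_le_left _ _
      _ = b * c := by field_simp; ring

theorem stmt4 (n : ℕ) (hn : 2 ≤ n)
    (F : ℝ → ℝ)
    (hF : ∀ t : ℝ, F t = ∑ m ∈ Finset.Icc 1 (2 ^ (n - 1)),
      (Set.Ioc (1 / (n : ℝ) ^ m) (1 / (n : ℝ) ^ (m - 1))).indicator
        (fun _ => (n : ℝ) ^ m * Real.log n) t) :
    wnorm F ≤ ENNReal.ofReal ((n : ℝ) * Real.log n) := by
  have hn' : (1 : ℝ) < n := by exact_mod_cast hn
  rw [show F = geomStep n (Real.log n) (2 ^ (n - 1)) from funext hF]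
  exact wnorm_geomStep_le hn' (Real.log_pos hn')
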